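/- arXiv:2510.19161 — 4 statements merged into one kernel-verified Lean document; each statement's English description precedes it below -/
import Mathlib

section
/- Let (𝒳, Σ) be a measurable space with a probability measure μ, let E ⊆ 𝒳 be a measurable set, and let y, y_ξ : 𝒳 → ℝ be measurable functions that are integrable with respect to μ. Suppose there is a constant C̃ with 0 ≤ C̃ < 1 such that |∫_{𝒳∖E} (y − y_ξ) dμ| ≤ C̃ · |∫_E (y − y_ξ) dμ| (the signed data-consistency condition). Then W₁(y♯μ, y_ξ♯μ) ≥ (1 − C̃) · |∫_E (y − y_ξ) dμ|. -/
/-!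
Under any coupling `γ` of `ν₁` and `ν₂`, the difference of the means is `∫ (a - b) dγ`, whose absolute
value is at most `∫ |a - b| dγ`; so `W₁` dominates the difference of the means, which for the push-forwards
is `|∫ (y - y_ξ) dμ|`. Splitting this integral over `E` and `Eᶜ`, the reverse triangle inequality and the
data-consistency condition bound it below by `(1 - C) |∫_E (y - y_ξ) dμ|`.
-/

open MeasureTheory
open scoped ENNReal

/-- A coupling of two probability measures on `ℝ` is a measure on `ℝ × ℝ`
whose first marginal is `ν₁` and whose second marginal is `ν₂`. -/
def IsCoupling (γ : Measure (ℝ × ℝ)) (ν₁ ν₂ : Measure ℝ) : Prop :=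
  γ.map Prod.fst = ν₁ ∧ γ.map Prod.snd = ν₂

/-- The 1-Wasserstein distance between two measures on `ℝ`:
the infimum over all couplings `γ` of `∫ |a - b| dγ(a, b)`. -/
noncomputable def W1 (ν₁ ν₂ : Measure ℝ) : ℝ≥0∞ :=
  ⨅ (γ : Measure (ℝ × ℝ)) (_ : IsCoupling γ ν₁ ν₂), ∫⁻ q, edist q.1 q.2 ∂γ

namespace IsCoupling

variable {γ : Measure (ℝ × ℝ)} {ν₁ ν₂ : Measure ℝ}

theorem integral_fst (hγ : IsCoupling γ ν₁ ν₂) : ∫ q, q.1 ∂γ = ∫ a, a ∂ν₁ := by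
  rw [← hγ.1]
  exact (integral_map measurable_fst.aemeasurable aestronglyMeasurable_id).symm

theorem integral_snd (hγ : IsCoupling γ ν₁ ν₂) : ∫ q, q.2 ∂γ = ∫ a, a ∂ν₂ := by
  rw [← hγ.2]
  exact (integral_map measurable_snd.aemeasurable aestronglyMeasurable_id).symm

theorem integrable_fst (hγ : IsCoupling γ ν₁ ν₂) (h₁ : Integrable id ν₁) :
    Integrable Prod.fst γ := by
  rw [← hγ.1] at h₁
  exact (integrable_map_measure aestronglyMeasurable_id measurable_fst.aemeasurable).mp h₁

theorem integrable_snd (hγ : IsCoupling γ ν₁ ν₂) (h₂ : Integrable id ν₂) :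
    Integrable Prod.snd γ := by
  rw [← hγ.2] at h₂
  exact (integrable_map_measure aestronglyMeasurable_id measurable_snd.aemeasurable).mp h₂

end IsCoupling

theorem ofReal_abs_integral_sub_integral_le_W1 {ν₁ ν₂ : Measure ℝ}
    (h₁ : Integrable id ν₁) (h₂ : Integrable id ν₂) :
    ENNReal.ofReal |∫ a, a ∂ν₁ - ∫ a, a ∂ν₂| ≤ W1 ν₁ ν₂ := by
  refine le_iInf₂ fun γ hγ => ?_
  have hmean : ∫ a, a ∂ν₁ - ∫ a, a ∂ν₂ = ∫ q, (q.1 - q.2) ∂γ := by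
    rw [integral_sub (hγ.integrable_fst h₁) (hγ.integrable_snd h₂), hγ.integral_fst,
      hγ.integral_snd]
  calc ENNReal.ofReal |∫ a, a ∂ν₁ - ∫ a, a ∂ν₂|
      = ‖∫ q, (q.1 - q.2) ∂γ‖ₑ := by
        rw [hmean, ← Real.norm_eq_abs, ofReal_norm]
    _ ≤ ∫⁻ q, ‖q.1 - q.2‖ₑ ∂γ := enorm_integral_le_lintegral_enorm _
    _ = ∫⁻ q, edist q.1 q.2 ∂γ := by simp only [edist_eq_enorm_sub]

theorem ofReal_abs_integral_sub_le_W1_map {𝒳 : Type*} [MeasurableSpace 𝒳] {μ : Measure 𝒳}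
    {f g : 𝒳 → ℝ} (hf : Measurable f) (hg : Measurable g)
    (hif : Integrable f μ) (hig : Integrable g μ) :
    ENNReal.ofReal |∫ x, (f x - g x) ∂μ| ≤ W1 (μ.map f) (μ.map g) := by
  have hmap : ∀ {h : 𝒳 → ℝ}, Measurable h → ∫ a, a ∂(μ.map h) = ∫ x, h x ∂μ := fun hh =>
    integral_map hh.aemeasurable aestronglyMeasurable_id
  have hint : ∀ {h : 𝒳 → ℝ}, Measurable h → Integrable h μ → Integrable id (μ.map h) :=
    fun hh hih => (integrable_map_measure aestronglyMeasurable_id hh.aemeasurable).mpr hih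
  rw [integral_sub hif hig, ← hmap hf, ← hmap hg]
  exact ofReal_abs_integral_sub_integral_le_W1 (hint hf hif) (hint hg hig)

theorem one_sub_mul_abs_le_abs_add {a b C : ℝ} (h : |b| ≤ C * |a|) :
    (1 - C) * |a| ≤ |a + b| := by
  have := abs_sub_abs_le_abs_sub a (-b)
  rw [abs_neg, sub_neg_eq_add] at this
  linarith

theorem w1_lower_bound_data_consistent_general
    {𝒳 : Type*} [MeasurableSpace 𝒳] (μ : Measure 𝒳)
    (E : Set 𝒳) (hE : MeasurableSet E)
    (y yξ : 𝒳 → ℝ) (hy : Measurable y) (hyξ : Measurable yξ)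
    (hiy : Integrable y μ) (hiyξ : Integrable yξ μ)
    (C : ℝ)
    (hdc : |∫ x in Eᶜ, (y x - yξ x) ∂μ| ≤ C * |∫ x in E, (y x - yξ x) ∂μ|) :
    ENNReal.ofReal ((1 - C) * |∫ x in E, (y x - yξ x) ∂μ|) ≤
      W1 (μ.map y) (μ.map yξ) := by
  have hsplit := integral_add_compl (f := fun x => y x - yξ x) hE (hiy.sub hiyξ)
  calc ENNReal.ofReal ((1 - C) * |∫ x in E, (y x - yξ x) ∂μ|)
      ≤ ENNReal.ofReal |∫ x, (y x - yξ x) ∂μ| := by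
        rw [← hsplit]
        exact ENNReal.ofReal_le_ofReal (one_sub_mul_abs_le_abs_add hdc)
    _ ≤ W1 (μ.map y) (μ.map yξ) := ofReal_abs_integral_sub_le_W1_map hy hyξ hiy hiyξ

/-- Lower bound on the 1-Wasserstein distance for a data-consistent estimator
(signed sense). -/
theorem w1_lower_bound_data_consistent
    {𝒳 : Type*} [MeasurableSpace 𝒳] (μ : Measure 𝒳) [IsProbabilityMeasure μ]
    (E : Set 𝒳) (hE : MeasurableSet E)
    (y yξ : 𝒳 → ℝ) (hy : Measurable y) (hyξ : Measurable yξ)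
    (hiy : Integrable y μ) (hiyξ : Integrable yξ μ)
    (C : ℝ) (hC0 : 0 ≤ C) (hC1 : C < 1)
    (hdc : |∫ x in Eᶜ, (y x - yξ x) ∂μ| ≤ C * |∫ x in E, (y x - yξ x) ∂μ|) :
    ENNReal.ofReal ((1 - C) * |∫ x in E, (y x - yξ x) ∂μ|) ≤
      W1 (μ.map y) (μ.map yξ) :=
  w1_lower_bound_data_consistent_general μ E hE y yξ hy hyξ hiy hiyξ C hdc
end

section
/- Let (𝒳, Σ) be a measurable space with a probability measure μ, let E ⊆ 𝒳 be a measurable set, and let y, y_ξ : 𝒳 → ℝ be measurable functions that are integrable with respect to μ. Suppose there are constants C̃, Ĉ with 0 ≤ C̃ < 1, 0 ≤ Ĉ < 1, and K ≥ 1 such that: |∫_{𝒳∖E} (y − y_ξ) dμ| ≤ C̃ · |∫_E (y − y_ξ) dμ|, ∫_{𝒳∖E} |y − y_ξ| dμ ≤ Ĉ · ∫_E |y − y_ξ| dμ, and ∫_E |y_ξ − y| dμ ≤ K · |∫_E (y_ξ − y) dμ|. Then ((1 − C̃)/K) · ∫_E |y_ξ − y| dμ ≤ W₁(y_ξ♯μ,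 y♯μ) ≤ (1 + Ĉ) · ∫_E |y_ξ − y| dμ. -/
open MeasureTheory
open scoped ENNReal

/-- Matching lower and upper bounds: the 1-Wasserstein distance is equivalent, up to
multiplicative constants, to the extreme-region absolute error. -/
theorem w1_optimality_relative
    {𝒳 : Type*} [MeasurableSpace 𝒳] (μ : Measure 𝒳) [IsProbabilityMeasure μ]
    (E : Set 𝒳) (hE : MeasurableSet E)
    (y yξ : 𝒳 → ℝ) (hy : Measurable y) (hyξ : Measurable yξ)
    (hiy : Integrable y μ) (hiyξ : Integrable yξ μ)
    (Ct Ch K : ℝ) (hCt0 : 0 ≤ Ct) (hCt1 : Ct < 1) (hCh0 : 0 ≤ Ch) (hCh1 : Ch < 1)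
    (hK : 1 ≤ K)
    (hsigned : |∫ x in Eᶜ, (y x - yξ x) ∂μ| ≤ Ct * |∫ x in E, (y x - yξ x) ∂μ|)
    (habs : ∫ x in Eᶜ, |y x - yξ x| ∂μ ≤ Ch * ∫ x in E, |y x - yξ x| ∂μ)
    (hnc : ∫ x in E, |yξ x - y x| ∂μ ≤ K * |∫ x in E, (yξ x - y x) ∂μ|) :
    ENNReal.ofReal (((1 - Ct) / K) * ∫ x in E, |yξ x - y x| ∂μ) ≤
        W1 (μ.map yξ) (μ.map y) ∧
      W1 (μ.map yξ) (μ.map y) ≤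
        ENNReal.ofReal ((1 + Ch) * ∫ x in E, |yξ x - y x| ∂μ) := by
  have hK0 : (0:ℝ) < K := lt_of_lt_of_le one_pos hK
  set f : 𝒳 → ℝ := fun x => yξ x - y x with hfdef
  have hfi : Integrable f μ := hiyξ.sub hiy
  have hfm : Measurable f := hyξ.sub hy
  set I : ℝ := ∫ x in E, |yξ x - y x| ∂μ with hIdef
  have hInn : 0 ≤ I := integral_nonneg fun x => abs_nonneg _
  have hsplit : I + ∫ x in Eᶜ, |yξ x - y x| ∂μ = ∫ x, |yξ x - y x| ∂μ := by
    exact integral_add_compl hE hfi.abs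
  have habs' : ∫ x in Eᶜ, |yξ x - y x| ∂μ ≤ Ch * I := by
    have h1 : ∀ x, |y x - yξ x| = |yξ x - y x| := fun x => abs_sub_comm _ _
    simpa [h1] using habs
  constructor
  · -- lower bound
    refine le_iInf fun γ => le_iInf fun hγ => ?_
    by_cases htop : (∫⁻ q, edist q.1 q.2 ∂γ) = ⊤
    · simp [htop]
    have hne : (∫⁻ q, edist q.1 q.2 ∂γ) < ⊤ := lt_top_iff_ne_top.mpr htop
    -- integrability of the coordinate functions w.r.t. γ
    have hfst : Integrable (fun q : ℝ × ℝ => q.1) γ := by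
      have h1 : Integrable id (γ.map Prod.fst) := by
        rw [hγ.1]
        exact (integrable_map_measure aestronglyMeasurable_id hyξ.aemeasurable).mpr hiyξ
      exact (integrable_map_measure aestronglyMeasurable_id measurable_fst.aemeasurable).mp h1
    have hsnd : Integrable (fun q : ℝ × ℝ => q.2) γ := by
      have h1 : Integrable id (γ.map Prod.snd) := by
        rw [hγ.2]
        exact (integrable_map_measure aestronglyMeasurable_id hy.aemeasurable).mpr hiy
      exact (integrable_map_measure aestronglyMeasurable_id measurable_snd.aemeasurable).mp h1
    have hsubint : Integrable (fun q : ℝ × ℝ => q.1 - q.2) γ := hfst.sub hsnd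
    -- the mean difference identity
    have hfstint : ∫ q : ℝ × ℝ, q.1 ∂γ = ∫ x, yξ x ∂μ := by
      have h1 : ∫ q : ℝ × ℝ, q.1 ∂γ = ∫ a, id a ∂(γ.map Prod.fst) := by
        rw [integral_map measurable_fst.aemeasurable aestronglyMeasurable_id]
        rfl
      rw [h1, hγ.1, integral_map hyξ.aemeasurable aestronglyMeasurable_id]
      rfl
    have hsndint : ∫ q : ℝ × ℝ, q.2 ∂γ = ∫ x, y x ∂μ := by
      have h1 : ∫ q : ℝ × ℝ, q.2 ∂γ = ∫ a, id a ∂(γ.map Prod.snd) := by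
        rw [integral_map measurable_snd.aemeasurable aestronglyMeasurable_id]
        rfl
      rw [h1, hγ.2, integral_map hy.aemeasurable aestronglyMeasurable_id]
      rfl
    have hmean : ∫ q : ℝ × ℝ, (q.1 - q.2) ∂γ = ∫ x, f x ∂μ := by
      rw [integral_sub hfst hsnd, hfstint, hsndint, hfdef, integral_sub hiyξ hiy]
    -- real inequality
    set A : ℝ := ∫ x in E, f x ∂μ with hAdef
    set B : ℝ := ∫ x in Eᶜ, f x ∂μ with hBdef
    have hT : ∫ x, f x ∂μ = A + B := (integral_add_compl hE hfi).symm
    have hBA : |B| ≤ Ct * |A| := by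
      have h1 : ∀ s : Set 𝒳, ∫ x in s, (y x - yξ x) ∂μ = - ∫ x in s, f x ∂μ := by
        intro s
        rw [← integral_neg]
        congr 1 with x
        simp [hfdef]
      rw [h1 E, h1 Eᶜ, abs_neg, abs_neg] at hsigned
      exact hsigned
    have hIA : I ≤ K * |A| := hnc
    have habsA : |A| ≤ |A + B| + |B| := by
      have := abs_add_le (A + B) (-B)
      simpa using this
    have hcnn : 0 ≤ (1 - Ct) / K := div_nonneg (by linarith) hK0.le
    have hkey : (1 - Ct) / K * I ≤ |A + B| := by
      have h2 : (1 - Ct) / K * I ≤ (1 - Ct) / K * (K * |A|) :=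
        mul_le_mul_of_nonneg_left hIA hcnn
      have h3 : (1 - Ct) / K * (K * |A|) = (1 - Ct) * |A| := by
        field_simp
      nlinarith [abs_nonneg A]
    -- pass to lintegral
    have hed : ∀ q : ℝ × ℝ, edist q.1 q.2 = ENNReal.ofReal |q.1 - q.2| := by
      intro q; rw [edist_dist, Real.dist_eq]
    have hli : ∫⁻ q, edist q.1 q.2 ∂γ = ENNReal.ofReal (∫ q : ℝ × ℝ, |q.1 - q.2| ∂γ) := by
      simp_rw [hed]
      exact (ofReal_integral_eq_lintegral_ofReal hsubint.abs
        (Filter.Eventually.of_forall fun q => abs_nonneg _)).symm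
    rw [hli]
    apply ENNReal.ofReal_le_ofReal
    calc (1 - Ct) / K * I ≤ |A + B| := hkey
      _ = |∫ q : ℝ × ℝ, (q.1 - q.2) ∂γ| := by rw [hmean, hT]
      _ ≤ ∫ q : ℝ × ℝ, |q.1 - q.2| ∂γ := by
          simpa [Real.norm_eq_abs] using norm_integral_le_integral_norm
            (μ := γ) (f := fun q : ℝ × ℝ => q.1 - q.2)
  · -- upper bound
    have hpair : Measurable fun x => (yξ x, y x) := hyξ.prodMk hy
    have hcoup : IsCoupling (μ.map fun x => (yξ x, y x)) (μ.map yξ) (μ.map y) := by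
      constructor
      · rw [Measure.map_map measurable_fst hpair]; rfl
      · rw [Measure.map_map measurable_snd hpair]; rfl
    have hle : W1 (μ.map yξ) (μ.map y)
        ≤ ∫⁻ q, edist q.1 q.2 ∂(μ.map fun x => (yξ x, y x)) := by
      exact iInf_le_of_le (μ.map fun x => (yξ x, y x)) (iInf_le _ hcoup)
    refine hle.trans ?_
    rw [lintegral_map (measurable_fst.edist measurable_snd) hpair]
    have hed : ∀ x, edist (yξ x) (y x) = ENNReal.ofReal |yξ x - y x| := by
      intro x; rw [edist_dist, Real.dist_eq]
    calc ∫⁻ x, edist (yξ x) (y x) ∂μ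
        = ENNReal.ofReal (∫ x, |yξ x - y x| ∂μ) := by
          simp_rw [hed]
          exact (ofReal_integral_eq_lintegral_ofReal hfi.abs
            (Filter.Eventually.of_forall fun x => abs_nonneg _)).symm
      _ ≤ ENNReal.ofReal ((1 + Ch) * I) := by
          apply ENNReal.ofReal_le_ofReal
          rw [← hsplit]
          linarith
end

section
/- Let (𝒳, Σ) be a measurable space with a probability measure μ, let E ⊆ 𝒳 be a measurable set, and let y, y_ξ, y_η : 𝒳 → ℝ be measurable functions that are integrable with respect to μ. Suppose ∫_{𝒳∖E} |y_ξ − y| dμ ≤ ε₁ and ∫_{𝒳∖E} |y_ξ − y_η| dμ ≤ ε₂ for some constants ε₁, ε₂ ≥ 0, and suppose ∫_E |y_η − y| dμ ≤ K · |∫_E (y_η − y) dμ| for some constant K ≥ 1. Then W₁(y_η♯μ, y♯μ) ≥ (1/K) · ∫_E |y_η − y| dμ − ε₁ − ε₂. -/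
open MeasureTheory
open scoped ENNReal

lemma coupling_mean_lb {𝒳 : Type*} [MeasurableSpace 𝒳] (μ : Measure 𝒳)
    (f g : 𝒳 → ℝ) (hf : Measurable f) (hg : Measurable g)
    (hif : Integrable f μ) (hig : Integrable g μ)
    (γ : Measure (ℝ × ℝ)) (h : IsCoupling γ (μ.map f) (μ.map g)) :
    ENNReal.ofReal |∫ x, f x ∂μ - ∫ x, g x ∂μ| ≤ ∫⁻ q, edist q.1 q.2 ∂γ := by
  have hfst : Integrable (fun q : ℝ × ℝ => q.1) γ := by
    have h1 : Integrable id (γ.map Prod.fst) := by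
      rw [h.1]
      exact (integrable_map_measure aestronglyMeasurable_id hf.aemeasurable).mpr hif
    exact (integrable_map_measure aestronglyMeasurable_id measurable_fst.aemeasurable).mp h1
  have hsnd : Integrable (fun q : ℝ × ℝ => q.2) γ := by
    have h1 : Integrable id (γ.map Prod.snd) := by
      rw [h.2]
      exact (integrable_map_measure aestronglyMeasurable_id hg.aemeasurable).mpr hig
    exact (integrable_map_measure aestronglyMeasurable_id measurable_snd.aemeasurable).mp h1
  have hsub : Integrable (fun q : ℝ × ℝ => q.1 - q.2) γ := hfst.sub hsnd
  have hI1 : ∫ q : ℝ × ℝ, q.1 ∂γ = ∫ x, f x ∂μ := by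
    calc ∫ q : ℝ × ℝ, q.1 ∂γ = ∫ a, id a ∂(γ.map Prod.fst) :=
          (integral_map measurable_fst.aemeasurable aestronglyMeasurable_id).symm
      _ = ∫ a, id a ∂(μ.map f) := by rw [h.1]
      _ = ∫ x, f x ∂μ := integral_map hf.aemeasurable aestronglyMeasurable_id
  have hI2 : ∫ q : ℝ × ℝ, q.2 ∂γ = ∫ x, g x ∂μ := by
    calc ∫ q : ℝ × ℝ, q.2 ∂γ = ∫ a, id a ∂(γ.map Prod.snd) :=
          (integral_map measurable_snd.aemeasurable aestronglyMeasurable_id).symm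
      _ = ∫ a, id a ∂(μ.map g) := by rw [h.2]
      _ = ∫ x, g x ∂μ := integral_map hg.aemeasurable aestronglyMeasurable_id
  have key : |∫ x, f x ∂μ - ∫ x, g x ∂μ| ≤ ∫ q : ℝ × ℝ, |q.1 - q.2| ∂γ := by
    rw [← hI1, ← hI2, ← integral_sub hfst hsnd]
    simpa [Real.norm_eq_abs] using norm_integral_le_integral_norm (fun q : ℝ × ℝ => q.1 - q.2) (μ := γ)
  have heq : ∫⁻ q, edist q.1 q.2 ∂γ = ENNReal.ofReal (∫ q : ℝ × ℝ, |q.1 - q.2| ∂γ) := by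
    simp only [edist_dist, Real.dist_eq]
    rw [← ofReal_integral_eq_lintegral_ofReal hsub.abs
      (Filter.Eventually.of_forall fun q => abs_nonneg _)]
  calc ENNReal.ofReal |∫ x, f x ∂μ - ∫ x, g x ∂μ|
      ≤ ENNReal.ofReal (∫ q : ℝ × ℝ, |q.1 - q.2| ∂γ) := ENNReal.ofReal_le_ofReal key
    _ = ∫⁻ q, edist q.1 q.2 ∂γ := heq.symm

/-- Lower bound on the 1-Wasserstein distance for the eta-estimator under the
no-cancellation assumption. -/
theorem w1_eta_lower_bound
    {𝒳 : Type*} [MeasurableSpace 𝒳] (μ : Measure 𝒳) [IsProbabilityMeasure μ]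
    (E : Set 𝒳) (hE : MeasurableSet E)
    (y yξ yη : 𝒳 → ℝ) (hy : Measurable y) (hyξ : Measurable yξ) (hyη : Measurable yη)
    (hiy : Integrable y μ) (hiyξ : Integrable yξ μ) (hiyη : Integrable yη μ)
    (ε₁ ε₂ K : ℝ) (hε₁ : 0 ≤ ε₁) (hε₂ : 0 ≤ ε₂) (hK : 1 ≤ K)
    (h₁ : ∫ x in Eᶜ, |yξ x - y x| ∂μ ≤ ε₁)
    (h₂ : ∫ x in Eᶜ, |yξ x - yη x| ∂μ ≤ ε₂)
    (hnc : ∫ x in E, |yη x - y x| ∂μ ≤ K * |∫ x in E, (yη x - y x) ∂μ|) :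
    ENNReal.ofReal ((1 / K) * (∫ x in E, |yη x - y x| ∂μ) - ε₁ - ε₂) ≤
      W1 (μ.map yη) (μ.map y) := by
  have hK0 : (0:ℝ) < K := lt_of_lt_of_le one_pos hK
  have hisub : Integrable (fun x => yη x - y x) μ := hiyη.sub hiy
  set A := ∫ x in E, (yη x - y x) ∂μ with hA
  set B := ∫ x in Eᶜ, (yη x - y x) ∂μ with hB
  -- |B| ≤ ε₁ + ε₂
  have hBabs : |B| ≤ ε₂ + ε₁ := by
    have h3 : |B| ≤ ∫ x in Eᶜ, |yη x - y x| ∂μ := by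
      simpa [Real.norm_eq_abs] using
        norm_integral_le_integral_norm (fun x => yη x - y x) (μ := μ.restrict Eᶜ)
    have h4 : ∫ x in Eᶜ, |yη x - y x| ∂μ ≤
        ∫ x in Eᶜ, (|yξ x - yη x| + |yξ x - y x|) ∂μ := by
      apply setIntegral_mono_on (hisub.abs.restrict)
        (((hiyξ.sub hiyη).abs.add (hiyξ.sub hiy).abs).restrict) hE.compl
      intro x _
      have := abs_sub_abs_le_abs_sub (yη x) (y x)
      calc |yη x - y x| = |(yξ x - y x) - (yξ x - yη x)| := by ring_nf
        _ ≤ |yξ x - y x| + |yξ x - yη x| := abs_sub _ _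
        _ = |yξ x - yη x| + |yξ x - y x| := by ring
    have h5 : ∫ x in Eᶜ, (|yξ x - yη x| + |yξ x - y x|) ∂μ =
        (∫ x in Eᶜ, |yξ x - yη x| ∂μ) + ∫ x in Eᶜ, |yξ x - y x| ∂μ :=
      integral_add (hiyξ.sub hiyη).abs.restrict (hiyξ.sub hiy).abs.restrict
    linarith
  have hAabs : (1 / K) * (∫ x in E, |yη x - y x| ∂μ) ≤ |A| := by
    rw [div_mul_eq_mul_div, one_mul, div_le_iff₀' hK0]
    exact hnc
  have hsplit : ∫ x, (yη x - y x) ∂μ = A + B := (integral_add_compl hE hisub).symm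
  have hmean : (1 / K) * (∫ x in E, |yη x - y x| ∂μ) - ε₁ - ε₂ ≤
      |∫ x, yη x ∂μ - ∫ x, y x ∂μ| := by
    rw [← integral_sub hiyη hiy, hsplit]
    have := abs_add_le A B
    have h6 : |A| - |B| ≤ |A + B| := by
      have := abs_sub_abs_le_abs_sub A (-B)
      simp only [abs_neg, sub_neg_eq_add] at this
      linarith
    linarith
  apply le_iInf; intro γ; apply le_iInf; intro hγ
  calc ENNReal.ofReal ((1 / K) * (∫ x in E, |yη x - y x| ∂μ) - ε₁ - ε₂)
      ≤ ENNReal.ofReal |∫ x, yη x ∂μ - ∫ x, y x ∂μ| := ENNReal.ofReal_le_ofReal hmean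
    _ ≤ ∫⁻ q, edist q.1 q.2 ∂γ := coupling_mean_lb μ yη y hyη hy hiyη hiy γ hγ
end

section
/- Let (𝒳, Σ) be a measurable space with a probability measure μ, let E ⊆ 𝒳 be a measurable set, and let y, y_ξ, y_η : 𝒳 → ℝ be measurable functions that are integrable with respect to μ. Suppose ∫_{𝒳∖E} |y_ξ − y| dμ ≤ ε₁ and ∫_{𝒳∖E} |y_ξ − y_η| dμ ≤ ε₂ for some constants ε₁, ε₂ ≥ 0, and suppose ∫_E |y_η − y| dμ ≤ |∫_E (y_η − y) dμ| (i.e. the no-cancellation assumption holds with constant K = 1). Then |W₁(y_η♯μ, y♯μ) − ∫_E |y_η − y| dμ| ≤ ε₁ + ε₂. -/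
open MeasureTheory
open scoped ENNReal

private lemma natural_coupling_cost {𝒳 : Type*} [MeasurableSpace 𝒳] (μ : Measure 𝒳)
    (y yη : 𝒳 → ℝ) (hy : Measurable y) (hyη : Measurable yη)
    (hiy : Integrable y μ) (hiyη : Integrable yη μ) :
    ∫⁻ q, edist q.1 q.2 ∂(μ.map (fun x => (yη x, y x))) =
      ENNReal.ofReal (∫ x, |yη x - y x| ∂μ) := by
  rw [lintegral_map (measurable_fst.edist measurable_snd) (hyη.prodMk hy)]
  have : ∀ x : 𝒳, edist (yη x) (y x) = ENNReal.ofReal |yη x - y x| := by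
    intro x; rw [edist_dist, Real.dist_eq]
  simp_rw [this]
  rw [← ofReal_integral_eq_lintegral_ofReal
    (show Integrable (fun x => |yη x - y x|) μ from (hiyη.sub hiy).abs)
    (Filter.Eventually.of_forall fun x => abs_nonneg _)]

private lemma coupling_cost_lower {𝒳 : Type*} [MeasurableSpace 𝒳] (μ : Measure 𝒳)
    (y yη : 𝒳 → ℝ) (hy : Measurable y) (hyη : Measurable yη)
    (hiy : Integrable y μ) (hiyη : Integrable yη μ)
    (γ : Measure (ℝ × ℝ)) (hc : IsCoupling γ (μ.map yη) (μ.map y)) :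
    ENNReal.ofReal |∫ x, (yη x - y x) ∂μ| ≤ ∫⁻ q, edist q.1 q.2 ∂γ := by
  obtain ⟨h1, h2⟩ := hc
  have hid : Integrable id (μ.map yη) :=
    (integrable_map_measure aestronglyMeasurable_id hyη.aemeasurable).mpr hiyη
  have hid2 : Integrable id (μ.map y) :=
    (integrable_map_measure aestronglyMeasurable_id hy.aemeasurable).mpr hiy
  have hγ1 : Integrable (fun q : ℝ × ℝ => q.1) γ := by
    have := (integrable_map_measure aestronglyMeasurable_id measurable_fst.aemeasurable).mp
      (h1 ▸ hid)
    exact this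
  have hγ2 : Integrable (fun q : ℝ × ℝ => q.2) γ := by
    have := (integrable_map_measure aestronglyMeasurable_id measurable_snd.aemeasurable).mp
      (h2 ▸ hid2)
    exact this
  have e1 : ∫ q : ℝ × ℝ, q.1 ∂γ = ∫ x, yη x ∂μ := by
    have := integral_map (μ := γ) measurable_fst.aemeasurable
      (f := id) aestronglyMeasurable_id
    rw [h1] at this
    simp only [id] at this
    rw [← this]
    simpa using integral_map hyη.aemeasurable (aestronglyMeasurable_id (α := ℝ))
  have e2 : ∫ q : ℝ × ℝ, q.2 ∂γ = ∫ x, y x ∂μ := by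
    have := integral_map (μ := γ) measurable_snd.aemeasurable
      (f := id) aestronglyMeasurable_id
    rw [h2] at this
    simp only [id] at this
    rw [← this]
    simpa using integral_map hy.aemeasurable (aestronglyMeasurable_id (α := ℝ))
  have key : ∫ x, (yη x - y x) ∂μ = ∫ q : ℝ × ℝ, (q.1 - q.2) ∂γ := by
    rw [integral_sub hγ1 hγ2, e1, e2, integral_sub hiyη hiy]
  rw [key]
  calc ENNReal.ofReal |∫ q : ℝ × ℝ, (q.1 - q.2) ∂γ|
      ≤ ENNReal.ofReal (∫ q : ℝ × ℝ, |q.1 - q.2| ∂γ) :=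
        ENNReal.ofReal_le_ofReal (by
          simpa [Real.norm_eq_abs] using
            norm_integral_le_integral_norm (μ := γ) (fun q : ℝ × ℝ => q.1 - q.2))
    _ = ∫⁻ q, ENNReal.ofReal |q.1 - q.2| ∂γ :=
        ofReal_integral_eq_lintegral_ofReal ((hγ1.sub hγ2).abs)
          (Filter.Eventually.of_forall fun q => abs_nonneg _)
    _ = ∫⁻ q, edist q.1 q.2 ∂γ := by
        congr 1; funext q; rw [edist_dist, Real.dist_eq]

/-- The 1-Wasserstein distance is, up to an additive error of at most ε₁ + ε₂, equal
to the exact extreme-region absolute error of the eta-estimator (no-cancellation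
constant K = 1). -/
theorem w1_eta_optimality_exact
    {𝒳 : Type*} [MeasurableSpace 𝒳] (μ : Measure 𝒳) [IsProbabilityMeasure μ]
    (E : Set 𝒳) (hE : MeasurableSet E)
    (y yξ yη : 𝒳 → ℝ) (hy : Measurable y) (hyξ : Measurable yξ) (hyη : Measurable yη)
    (hiy : Integrable y μ) (hiyξ : Integrable yξ μ) (hiyη : Integrable yη μ)
    (ε₁ ε₂ : ℝ) (hε₁ : 0 ≤ ε₁) (hε₂ : 0 ≤ ε₂)
    (h₁ : ∫ x in Eᶜ, |yξ x - y x| ∂μ ≤ ε₁)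
    (h₂ : ∫ x in Eᶜ, |yξ x - yη x| ∂μ ≤ ε₂)
    (hnc : ∫ x in E, |yη x - y x| ∂μ ≤ |∫ x in E, (yη x - y x) ∂μ|) :
    W1 (μ.map yη) (μ.map y) ≠ ⊤ ∧
      |(W1 (μ.map yη) (μ.map y)).toReal - ∫ x in E, |yη x - y x| ∂μ| ≤ ε₁ + ε₂ := by
  set A := ∫ x in E, |yη x - y x| ∂μ with hA
  set B := ∫ x in Eᶜ, |yη x - y x| ∂μ with hBdef
  have hint : Integrable (fun x => |yη x - y x|) μ := (hiyη.sub hiy).abs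
  have hint₁ : Integrable (fun x => |yξ x - y x|) μ := (hiyξ.sub hiy).abs
  have hint₂ : Integrable (fun x => |yξ x - yη x|) μ := (hiyξ.sub hiyη).abs
  have hBnn : 0 ≤ B := setIntegral_nonneg hE.compl fun x _ => abs_nonneg _
  have hAnn : 0 ≤ A := setIntegral_nonneg hE fun x _ => abs_nonneg _
  -- B ≤ ε₁ + ε₂
  have hB : B ≤ ε₁ + ε₂ := by
    have hpt : ∀ x, |yη x - y x| ≤ |yξ x - y x| + |yξ x - yη x| := by
      intro x
      have : yη x - y x = (yξ x - y x) - (yξ x - yη x) := by ring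
      rw [this]
      exact abs_sub _ _
    have : B ≤ ∫ x in Eᶜ, (|yξ x - y x| + |yξ x - yη x|) ∂μ := by
      apply integral_mono hint.restrict (hint₁.add hint₂).restrict
      exact fun x => hpt x
    rw [integral_add hint₁.restrict hint₂.restrict] at this
    linarith
  -- total integral splits
  have htot : ∫ x, |yη x - y x| ∂μ = A + B := by
    rw [hA, hBdef, integral_add_compl hE hint]
  -- upper bound on W1
  have hub : W1 (μ.map yη) (μ.map y) ≤ ENNReal.ofReal (A + B) := by
    have hcp : IsCoupling (μ.map (fun x => (yη x, y x))) (μ.map yη) (μ.map y) := by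
      constructor
      · rw [Measure.map_map measurable_fst (hyη.prodMk hy)]; rfl
      · rw [Measure.map_map measurable_snd (hyη.prodMk hy)]; rfl
    calc W1 (μ.map yη) (μ.map y)
        ≤ ∫⁻ q, edist q.1 q.2 ∂(μ.map (fun x => (yη x, y x))) := by
          unfold W1
          exact iInf₂_le (μ.map (fun x => (yη x, y x))) hcp
      _ = ENNReal.ofReal (∫ x, |yη x - y x| ∂μ) :=
          natural_coupling_cost μ y yη hy hyη hiy hiyη
      _ = ENNReal.ofReal (A + B) := by rw [htot]
  have hne : W1 (μ.map yη) (μ.map y) ≠ ⊤ :=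
    ne_top_of_le_ne_top ENNReal.ofReal_ne_top hub
  refine ⟨hne, ?_⟩
  have hubR : (W1 (μ.map yη) (μ.map y)).toReal ≤ A + B :=
    ENNReal.toReal_le_of_le_ofReal (by linarith) hub
  -- lower bound on W1
  have hlb : ENNReal.ofReal |∫ x, (yη x - y x) ∂μ| ≤ W1 (μ.map yη) (μ.map y) :=
    by unfold W1; exact le_iInf₂ fun γ hγ => coupling_cost_lower μ y yη hy hyη hiy hiyη γ hγ
  have hlbR : |∫ x, (yη x - y x) ∂μ| ≤ (W1 (μ.map yη) (μ.map y)).toReal :=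
    (ENNReal.ofReal_le_iff_le_toReal hne).mp hlb
  -- A - B ≤ |∫ (yη - y)|
  have hEabs : |∫ x in Eᶜ, (yη x - y x) ∂μ| ≤ B := by
    simpa [Real.norm_eq_abs] using
      norm_integral_le_integral_norm (μ := μ.restrict Eᶜ) (fun x => yη x - y x)
  have hsplit : ∫ x, (yη x - y x) ∂μ =
      (∫ x in E, (yη x - y x) ∂μ) + ∫ x in Eᶜ, (yη x - y x) ∂μ :=
    (integral_add_compl hE (hiyη.sub hiy)).symm
  have hAB : A - B ≤ |∫ x, (yη x - y x) ∂μ| := by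
    rw [hsplit]
    have h3 : |∫ x in E, (yη x - y x) ∂μ| - |∫ x in Eᶜ, (yη x - y x) ∂μ| ≤
        |(∫ x in E, (yη x - y x) ∂μ) + ∫ x in Eᶜ, (yη x - y x) ∂μ| := by
      have := abs_add_le ((∫ x in E, (yη x - y x) ∂μ) + ∫ x in Eᶜ, (yη x - y x) ∂μ)
        (-(∫ x in Eᶜ, (yη x - y x) ∂μ))
      simp only [add_neg_cancel_right, abs_neg] at this
      linarith
    linarith
  rw [abs_sub_le_iff]
  constructor
  · linarith
  · linarith
end
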